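/- arXiv:1002.2105 — 2 statements merged into one kernel-verified Lean document; each statement's English description precedes it below -/
import Mathlib

section
/- Let n ≥ 1, d > 0, and let U be a finite nonempty set of controls with parameters α_u ∈ ℝ and β_u ∈ [0,1] for u ∈ U. Define μ = min_{u∈U} (α_u + β_u/d) and x ∈ ℝ^n by x_i = (i-1)/d. Then for every i ∈ {1,...,n}, μ + x_i = min_{u∈U} { (1-β_u) x_i + β_u x_{i+1} + α_u } for i < n, and μ + x_n = min_{u∈U} { (1-β_u) x_n + β_u x_1 + α_u + n β_u / d }. (That is, (μ, x) solves the dynamic programming eigenvalue equation of the stochastic optimal control traffic model.) -/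
/-! On the uniform configuration every headway, including the wrap-around one
`x₁ + n / d - xₙ`, equals `1 / d`; so the `u`-th term of the minimum at car `i` is
`xᵢ + (α u + β u / d)`, and minimising over `u` gives `xᵢ + μ`. -/

open Finset

lemma Finset.add_inf' {ι G : Type*} [AddGroup G] [LinearOrder G] [AddLeftMono G]
    {s : Finset ι} (hs : s.Nonempty) (f : ι → G) (a : G) :
    a + s.inf' hs f = s.inf' hs fun i ↦ a + f i :=
  map_finset_inf' (OrderIso.addLeft a) hs f

theorem stmt_0 {n : ℕ} (hn : 1 ≤ n) (d : ℝ)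
    {U : Type} [Fintype U] [Nonempty U]
    (α β : U → ℝ)
    (μ : ℝ) (hμ : μ = univ.inf' univ_nonempty (fun u => α u + β u / d))
    (x : Fin n → ℝ) (hx : ∀ i, x i = (i : ℕ) / d) :
    (∀ i : Fin n, ∀ h : (i : ℕ) + 1 < n,
      μ + x i = univ.inf' univ_nonempty
        (fun u => (1 - β u) * x i + β u * x ⟨(i : ℕ) + 1, h⟩ + α u)) ∧
    μ + x ⟨n - 1, by omega⟩ = univ.inf' univ_nonempty
      (fun u => (1 - β u) * x ⟨n - 1, by omega⟩ + β u * x ⟨0, by omega⟩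
        + α u + n * β u / d) := by
  have shift (c : ℝ) : μ + c = univ.inf' univ_nonempty fun u => c + (α u + β u / d) := by
    rw [add_comm, hμ, add_inf']
  refine ⟨fun i h => ?_, ?_⟩
  · rw [shift]
    congr 1
    funext u
    simp only [hx]
    push_cast
    ring
  · rw [shift]
    congr 1
    funext u
    simp only [hx, Nat.cast_sub hn]
    push_cast
    ring
end

section
/- Let U be finite nonempty, α_u ∈ ℝ, β_u ∈ [0,1], and suppose some point (d₀, f(d₀)) of the diagram f(d) = min_u (α_u d + β_u) satisfies f(d₀) > 1 − d₀ with d₀ ∈ [0,1]. Then for every d' ∈ [d₀, 1], f(d') > 1 − d'. In particular f(1) > 0, so the jam point (1,0) is never reached. -/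
open Finset

/-- The hypotheses force `a > -1`, so the gap between the line and `1 - d` grows with `d`. -/
lemma one_sub_lt_mul_add_of_le {a b d₀ d : ℝ} (hb : b ≤ 1) (hd₀ : 0 ≤ d₀) (hd : d₀ ≤ d)
    (h : 1 - d₀ < a * d₀ + b) : 1 - d < a * d + b := by
  have hpos : 0 < (a + 1) * d₀ := by linarith
  have hslope : 0 < a + 1 := pos_of_mul_pos_left hpos hd₀
  linarith [mul_le_mul_of_nonneg_left hd hslope.le]

theorem stmt_7 {U : Type} [Fintype U] [Nonempty U]
    (α β : U → ℝ) (hβ : ∀ u, β u ∈ Set.Icc (0:ℝ) 1)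
    (f : ℝ → ℝ) (hf : ∀ d, f d = univ.inf' univ_nonempty (fun u => α u * d + β u))
    (d₀ : ℝ) (hd₀ : d₀ ∈ Set.Icc (0:ℝ) 1) (habove : f d₀ > 1 - d₀) :
    (∀ d' ∈ Set.Icc d₀ 1, f d' > 1 - d') ∧ f 1 > 0 := by
  have above : ∀ d' ∈ Set.Icc d₀ 1, f d' > 1 - d' := by
    rintro d' ⟨hd₀d', -⟩
    rw [hf, gt_iff_lt, lt_inf'_iff] at habove ⊢
    exact fun u hu => one_sub_lt_mul_add_of_le (hβ u).2 hd₀.1 hd₀d' (habove u hu)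
  exact ⟨above, by linarith [above 1 ⟨hd₀.2, le_rfl⟩]⟩
end
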